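/- For every λ ∈ 𝔫*: L_λ = {g ∈ G : gλ = λ} and S_λ = {g ∈ G : gλ ∈ Gλ ∩ λG}; consequently |S_λ|/|L_λ| = |Gλ ∩ λG| = ⟨χ_λ, χ_λ⟩_G. -/

import Mathlib

open scoped Classical BigOperators ComplexOrder

set_option linter.unusedSectionVars false
set_option linter.unusedVariables false

noncomputable section

namespace IterChar

/-! ### Generic notions for finite groups: inner product, induction, characters -/

/-- The standard inner product `⟨f,h⟩_G = |G|⁻¹ ∑_{x ∈ G} f x * conj (h x)`. -/
def innerG (G : Type) [Group G] (f h : G → ℂ) : ℂ :=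
  (Nat.card G : ℂ)⁻¹ * ∑ᶠ x : G, f x * (starRingEnd ℂ) (h x)

/-- Induction of a function from a subgroup, via the Frobenius formula. -/
def indFun {G : Type} [Group G] (H : Subgroup G) (ψ : ↥H → ℂ) : G → ℂ :=
  fun g => (Nat.card ↥H : ℂ)⁻¹ *
    ∑ᶠ x : G, if h : x * g * x⁻¹ ∈ H then ψ ⟨x * g * x⁻¹, h⟩ else 0

/-- A function `G → ℂ` is a character if it is the trace character of some
finite-dimensional complex representation. -/
def IsCharacter (G : Type) [Group G] (f : G → ℂ) : Prop :=
  ∃ V : FDRep ℂ G, f = FDRep.character V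

/-- The set of irreducible characters of `G`: characters of norm one. -/
def Irr (G : Type) [Group G] : Set (G → ℂ) :=
  {f | IsCharacter G f ∧ innerG G f f = 1}

/-- The set of irreducible constituents of `χ`: irreducible characters with
`⟨χ, ψ⟩_G > 0` (using the complex partial order). -/
def IrrConstituents (G : Type) [Group G] (χ : G → ℂ) : Set (G → ℂ) :=
  {f | f ∈ Irr G ∧ 0 < innerG G χ f}

/-! ### Algebra groups -/

variable {F : Type} [Field F] [Fintype F] {R : Type} [Ring R] [Algebra F R] [Fintype R]

/-- `J` is a nilpotent (non-unital) subalgebra: all products of some fixed length vanish. -/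
def IsNil (J : NonUnitalSubalgebra F R) : Prop :=
  ∃ N : ℕ, ∀ l : List R, (∀ x ∈ l, x ∈ J) → l.length = N → l.prod = 0

/-- The algebra group `G = 1 + J` of a (nilpotent) subalgebra `J ⊆ R`, realized as the
subgroup of units `u` of `R` with `u - 1 ∈ J` (and `u⁻¹ - 1 ∈ J`, which is automatic
when `J` is nilpotent). -/
def algGroup (F : Type) [Field F] [Fintype F] (R : Type) [Ring R] [Algebra F R] [Fintype R]
    (J : NonUnitalSubalgebra F R) : Subgroup Rˣ where
  carrier := {u : Rˣ | ((u : R) - 1 ∈ J) ∧ (((u⁻¹ : Rˣ) : R) - 1 ∈ J)}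
  one_mem' := by
    constructor <;> · simp only [Units.val_one, inv_one, sub_self]; exact J.zero_mem
  mul_mem' := by
    rintro u v ⟨hu1, hu2⟩ ⟨hv1, hv2⟩
    constructor
    · have h : ((u * v : Rˣ) : R) - 1 =
          ((u : R) - 1) * ((v : R) - 1) + ((u : R) - 1) + ((v : R) - 1) := by
        push_cast; noncomm_ring
      rw [h]
      exact add_mem (add_mem (mul_mem hu1 hv1) hu1) hv1
    · have h : (((u * v)⁻¹ : Rˣ) : R) - 1 =
          (((v⁻¹ : Rˣ) : R) - 1) * (((u⁻¹ : Rˣ) : R) - 1) +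
            (((v⁻¹ : Rˣ) : R) - 1) + (((u⁻¹ : Rˣ) : R) - 1) := by
        rw [mul_inv_rev]; push_cast; noncomm_ring
      rw [h]
      exact add_mem (add_mem (mul_mem hv2 hu2) hv2) hu2
  inv_mem' := by
    rintro u ⟨h1, h2⟩
    exact ⟨h2, by simpa using h1⟩

theorem mem_algGroup {J : NonUnitalSubalgebra F R} {u : Rˣ} :
    u ∈ algGroup F R J ↔ ((u : R) - 1 ∈ J) ∧ (((u⁻¹ : Rˣ) : R) - 1 ∈ J) :=
  Iff.rfl

/-- The element `X ∈ J` such that `g = 1 + X`. -/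
def gElt {J : NonUnitalSubalgebra F R} (g : ↥(algGroup F R J)) : ↥J :=
  ⟨((g : Rˣ) : R) - 1, g.2.1⟩

/-- The function `θ_λ(1+X) = θ(λ(X))` on the algebra group `1 + J`. -/
def thetaFn (θ : AddChar F ℂ) (J : NonUnitalSubalgebra F R) (lam : ↥J →ₗ[F] F) :
    ↥(algGroup F R J) → ℂ :=
  fun g => θ (lam (gElt g))

/-- Left multiplication by the group element `g` as a linear endomorphism of `J`. -/
def lmulMap {J : NonUnitalSubalgebra F R} (g : ↥(algGroup F R J)) : ↥J →ₗ[F] ↥J where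
  toFun X := ⟨((g : Rˣ) : R) * (X : R), by
    have h : ((g : Rˣ) : R) * (X : R) = (((g : Rˣ) : R) - 1) * (X : R) + (X : R) := by
      noncomm_ring
    rw [h]; exact add_mem (mul_mem g.2.1 X.2) X.2⟩
  map_add' X Y := by ext; simp [mul_add]
  map_smul' c X := by ext; simp [mul_smul_comm]

/-- Right multiplication by the group element `g` as a linear endomorphism of `J`. -/
def rmulMap {J : NonUnitalSubalgebra F R} (g : ↥(algGroup F R J)) : ↥J →ₗ[F] ↥J where
  toFun X := ⟨(X : R) * ((g : Rˣ) : R), by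
    have h : (X : R) * ((g : Rˣ) : R) = (X : R) * (((g : Rˣ) : R) - 1) + (X : R) := by
      noncomm_ring
    rw [h]; exact add_mem (mul_mem X.2 g.2.1) X.2⟩
  map_add' X Y := by ext; simp [add_mul]
  map_smul' c X := by ext; simp [smul_mul_assoc]

/-- The left action of `G` on the dual space: `(gλ)(X) = λ(g⁻¹ X)`. -/
def leftAct {J : NonUnitalSubalgebra F R} (g : ↥(algGroup F R J)) (lam : ↥J →ₗ[F] F) :
    ↥J →ₗ[F] F :=
  lam.comp (lmulMap g⁻¹)

/-- The right action of `G` on the dual space: `(λg)(X) = λ(X g⁻¹)`. -/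
def rightAct {J : NonUnitalSubalgebra F R} (g : ↥(algGroup F R J)) (lam : ↥J →ₗ[F] F) :
    ↥J →ₗ[F] F :=
  lam.comp (rmulMap g⁻¹)

/-- The coadjoint action of `G` on the dual space: `λ^g(X) = λ(g X g⁻¹)`. -/
def coAct {J : NonUnitalSubalgebra F R} (g : ↥(algGroup F R J)) (lam : ↥J →ₗ[F] F) :
    ↥J →ₗ[F] F :=
  lam.comp ((lmulMap g).comp (rmulMap g⁻¹))

/-- The left orbit `Gλ`. -/
def leftOrbit (J : NonUnitalSubalgebra F R) (lam : ↥J →ₗ[F] F) : Set (↥J →ₗ[F] F) :=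
  Set.range fun g : ↥(algGroup F R J) => leftAct g lam

/-- The right orbit `λG`. -/
def rightOrbit (J : NonUnitalSubalgebra F R) (lam : ↥J →ₗ[F] F) : Set (↥J →ₗ[F] F) :=
  Set.range fun g : ↥(algGroup F R J) => rightAct g lam

/-- The two-sided orbit `GλG`. -/
def twoOrbit (J : NonUnitalSubalgebra F R) (lam : ↥J →ₗ[F] F) : Set (↥J →ₗ[F] F) :=
  {mu | ∃ g h : ↥(algGroup F R J), mu = leftAct g (rightAct h lam)}

/-- The coadjoint orbit `λ^G`. -/
def coOrbit (J : NonUnitalSubalgebra F R) (lam : ↥J →ₗ[F] F) : Set (↥J →ₗ[F] F) :=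
  Set.range fun g : ↥(algGroup F R J) => coAct g lam

/-- The right orbit of `λ` under a subgroup `H` of the algebra group. -/
def rightOrbitUnder (J : NonUnitalSubalgebra F R) (H : Subgroup ↥(algGroup F R J))
    (lam : ↥J →ₗ[F] F) : Set (↥J →ₗ[F] F) :=
  {mu | ∃ s ∈ H, mu = rightAct s lam}

/-- The Kirillov function `ψ_λ = |λ^G|^{-1/2} ∑_{μ ∈ λ^G} θ_μ`. -/
def kirillov (θ : AddChar F ℂ) (J : NonUnitalSubalgebra F R) (lam : ↥J →ₗ[F] F) :
    ↥(algGroup F R J) → ℂ :=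
  fun g => ((Real.sqrt (Nat.card ↥(coOrbit J lam)) : ℂ))⁻¹ *
    ∑ᶠ mu ∈ coOrbit J lam, thetaFn θ J mu g

/-- The supercharacter `χ_λ = (|Gλ|/|GλG|) ∑_{μ ∈ GλG} θ_μ`. -/
def superchar (θ : AddChar F ℂ) (J : NonUnitalSubalgebra F R) (lam : ↥J →ₗ[F] F) :
    ↥(algGroup F R J) → ℂ :=
  fun g => ((Nat.card ↥(leftOrbit J lam) : ℂ) / (Nat.card ↥(twoOrbit J lam) : ℂ)) *
    ∑ᶠ mu ∈ twoOrbit J lam, thetaFn θ J mu g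

/-! ### The subalgebras `𝔩_λ`, `𝔰_λ` and their iterates -/

/-- The extension of `λ : J → F` by zero to all of `R`. -/
def lamE (J : NonUnitalSubalgebra F R) (lam : ↥J →ₗ[F] F) (x : R) : F :=
  if h : x ∈ J then lam ⟨x, h⟩ else 0

theorem lamE_apply (J : NonUnitalSubalgebra F R) (lam : ↥J →ₗ[F] F) {x : R} (hx : x ∈ J) :
    lamE J lam x = lam ⟨x, hx⟩ := dif_pos hx

theorem lamE_zero (J : NonUnitalSubalgebra F R) (lam : ↥J →ₗ[F] F) : lamE J lam 0 = 0 := by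
  rw [lamE_apply J lam J.zero_mem]
  have h : (⟨(0 : R), J.zero_mem⟩ : ↥J) = 0 := Subtype.ext rfl
  rw [h, map_zero]

theorem lamE_add (J : NonUnitalSubalgebra F R) (lam : ↥J →ₗ[F] F) {x y : R}
    (hx : x ∈ J) (hy : y ∈ J) : lamE J lam (x + y) = lamE J lam x + lamE J lam y := by
  rw [lamE, lamE, lamE, dif_pos (add_mem hx hy), dif_pos hx, dif_pos hy]
  have h : (⟨x + y, add_mem hx hy⟩ : ↥J) = ⟨x, hx⟩ + ⟨y, hy⟩ := Subtype.ext rfl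
  rw [h, map_add]

theorem lamE_smul (J : NonUnitalSubalgebra F R) (lam : ↥J →ₗ[F] F) (c : F) {x : R}
    (hx : x ∈ J) : lamE J lam (c • x) = c * lamE J lam x := by
  rw [lamE, lamE, dif_pos (SMulMemClass.smul_mem c hx), dif_pos hx]
  have h : (⟨c • x, SMulMemClass.smul_mem c hx⟩ : ↥J) = c • ⟨x, hx⟩ := Subtype.ext rfl
  rw [h, map_smul]
  rfl

/-- The left kernel `𝔩` of the bilinear form `(X,Y) ↦ λ(XY)` restricted to `s × s`. -/
def lStep (J : NonUnitalSubalgebra F R) (lam : ↥J →ₗ[F] F)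
    (s : NonUnitalSubalgebra F R) (hs : s ≤ J) : NonUnitalSubalgebra F R where
  carrier := {x | x ∈ s ∧ ∀ y ∈ s, lamE J lam (x * y) = 0}
  zero_mem' := ⟨zero_mem s, fun y _ => by rw [zero_mul, lamE_zero]⟩
  add_mem' := by
    rintro a b ⟨ha1, ha2⟩ ⟨hb1, hb2⟩
    refine ⟨add_mem ha1 hb1, fun y hy => ?_⟩
    rw [add_mul, lamE_add J lam (J.mul_mem (hs ha1) (hs hy)) (J.mul_mem (hs hb1) (hs hy)),
      ha2 y hy, hb2 y hy, add_zero]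
  smul_mem' := by
    rintro c a ⟨ha1, ha2⟩
    refine ⟨SMulMemClass.smul_mem c ha1, fun y hy => ?_⟩
    rw [smul_mul_assoc, lamE_smul J lam c (J.mul_mem (hs ha1) (hs hy)), ha2 y hy, mul_zero]
  mul_mem' := by
    rintro a b ⟨ha1, ha2⟩ ⟨hb1, hb2⟩
    refine ⟨mul_mem ha1 hb1, fun y hy => ?_⟩
    rw [mul_assoc]
    exact ha2 (b * y) (mul_mem hb1 hy)

theorem lStep_le (J : NonUnitalSubalgebra F R) (lam : ↥J →ₗ[F] F)
    (s : NonUnitalSubalgebra F R) (hs : s ≤ J) : lStep J lam s hs ≤ s :=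
  fun _ hx => hx.1

/-- The left kernel `𝔰` of the bilinear form `(X,Y) ↦ λ(XY)` restricted to `s × 𝔩`. -/
def sStep (J : NonUnitalSubalgebra F R) (lam : ↥J →ₗ[F] F)
    (s : NonUnitalSubalgebra F R) (hs : s ≤ J) : NonUnitalSubalgebra F R where
  carrier := {x | x ∈ s ∧ ∀ y ∈ lStep J lam s hs, lamE J lam (x * y) = 0}
  zero_mem' := ⟨zero_mem s, fun y _ => by rw [zero_mul, lamE_zero]⟩
  add_mem' := by
    rintro a b ⟨ha1, ha2⟩ ⟨hb1, hb2⟩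
    refine ⟨add_mem ha1 hb1, fun y hy => ?_⟩
    rw [add_mul, lamE_add J lam (J.mul_mem (hs ha1) (hs hy.1)) (J.mul_mem (hs hb1) (hs hy.1)),
      ha2 y hy, hb2 y hy, add_zero]
  smul_mem' := by
    rintro c a ⟨ha1, ha2⟩
    refine ⟨SMulMemClass.smul_mem c ha1, fun y hy => ?_⟩
    rw [smul_mul_assoc, lamE_smul J lam c (J.mul_mem (hs ha1) (hs hy.1)), ha2 y hy, mul_zero]
  mul_mem' := by
    rintro a b ⟨ha1, ha2⟩ ⟨hb1, hb2⟩
    refine ⟨mul_mem ha1 hb1, fun y hy => ?_⟩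
    rw [mul_assoc]
    refine ha2 (b * y) ⟨mul_mem hb1 hy.1, fun z hz => ?_⟩
    rw [mul_assoc]
    refine hb2 (y * z) ⟨mul_mem hy.1 hz, fun w hw => ?_⟩
    rw [mul_assoc]
    exact hy.2 (z * w) (mul_mem hz hw)

theorem sStep_le (J : NonUnitalSubalgebra F R) (lam : ↥J →ₗ[F] F)
    (s : NonUnitalSubalgebra F R) (hs : s ≤ J) : sStep J lam s hs ≤ s :=
  fun _ hx => hx.1

/-- `𝔩_λ`: the left kernel of `(X,Y) ↦ λ(XY)` on `J × J`. -/
def lone (J : NonUnitalSubalgebra F R) (lam : ↥J →ₗ[F] F) : NonUnitalSubalgebra F R :=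
  lStep J lam J le_rfl

/-- `𝔰_λ`: the left kernel of `(X,Y) ↦ λ(XY)` on `J × 𝔩_λ`. -/
def sone (J : NonUnitalSubalgebra F R) (lam : ↥J →ₗ[F] F) : NonUnitalSubalgebra F R :=
  sStep J lam J le_rfl

theorem lone_le (J : NonUnitalSubalgebra F R) (lam : ↥J →ₗ[F] F) : lone J lam ≤ J :=
  lStep_le J lam J le_rfl

theorem sone_le (J : NonUnitalSubalgebra F R) (lam : ↥J →ₗ[F] F) : sone J lam ≤ J :=
  sStep_le J lam J le_rfl

/-- `𝔨_λ = 𝔩_λ ∩ ker λ`. -/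
def kone (J : NonUnitalSubalgebra F R) (lam : ↥J →ₗ[F] F) : NonUnitalSubalgebra F R where
  carrier := {x | x ∈ lone J lam ∧ lamE J lam x = 0}
  zero_mem' := ⟨zero_mem _, lamE_zero J lam⟩
  add_mem' := by
    rintro a b ⟨ha1, ha2⟩ ⟨hb1, hb2⟩
    exact ⟨add_mem ha1 hb1, by
      rw [lamE_add J lam (lone_le J lam ha1) (lone_le J lam hb1), ha2, hb2, add_zero]⟩
  smul_mem' := by
    rintro c a ⟨ha1, ha2⟩
    exact ⟨SMulMemClass.smul_mem c ha1, by
      rw [lamE_smul J lam c (lone_le J lam ha1), ha2, mul_zero]⟩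
  mul_mem' := by
    rintro a b ⟨ha1, ha2⟩ ⟨hb1, hb2⟩
    exact ⟨mul_mem ha1 hb1, ha1.2 b (lone_le J lam hb1)⟩

theorem kone_le (J : NonUnitalSubalgebra F R) (lam : ↥J →ₗ[F] F) : kone J lam ≤ lone J lam :=
  fun _ hx => hx.1

/-- The descending chain `𝔰_λ^0 ⊇ 𝔰_λ^1 ⊇ ⋯` (bundled with the proof `𝔰_λ^i ≤ J`). -/
def sChainAux (J : NonUnitalSubalgebra F R) (lam : ↥J →ₗ[F] F) :
    ℕ → {s : NonUnitalSubalgebra F R // s ≤ J}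
  | 0 => ⟨J, le_rfl⟩
  | n + 1 =>
    ⟨sStep J lam (sChainAux J lam n).1 (sChainAux J lam n).2,
      le_trans (sStep_le J lam (sChainAux J lam n).1 (sChainAux J lam n).2)
        (sChainAux J lam n).2⟩

/-- `𝔰_λ^i`. -/
def sChain (J : NonUnitalSubalgebra F R) (lam : ↥J →ₗ[F] F) (i : ℕ) :
    NonUnitalSubalgebra F R :=
  (sChainAux J lam i).1

/-- `𝔩_λ^{i+1}`. -/
def lChain (J : NonUnitalSubalgebra F R) (lam : ↥J →ₗ[F] F) (i : ℕ) :
    NonUnitalSubalgebra F R :=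
  lStep J lam (sChainAux J lam i).1 (sChainAux J lam i).2

/-- The terminal element `𝔰̄_λ` of the descending chain; the chain has stabilized by
stage `|R|` since it is a weakly decreasing chain of subalgebras of the finite algebra. -/
def sbar (J : NonUnitalSubalgebra F R) (lam : ↥J →ₗ[F] F) : NonUnitalSubalgebra F R :=
  sChain J lam (Fintype.card R)

theorem sbar_le (J : NonUnitalSubalgebra F R) (lam : ↥J →ₗ[F] F) : sbar J lam ≤ J :=
  (sChainAux J lam (Fintype.card R)).2

/-- The terminal element `𝔩̄_λ` of the ascending chain. -/
def lbar (J : NonUnitalSubalgebra F R) (lam : ↥J →ₗ[F] F) : NonUnitalSubalgebra F R :=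
  lStep J lam (sbar J lam) (sbar_le J lam)

theorem lbar_le (J : NonUnitalSubalgebra F R) (lam : ↥J →ₗ[F] F) : lbar J lam ≤ J :=
  le_trans (lStep_le J lam _ _) (sbar_le J lam)

/-! ### Algebra subgroups of an algebra group -/

/-- The algebra subgroup `1 + k` of `1 + J`, as a subgroup of the ambient algebra group. -/
def algSubgroup (k J : NonUnitalSubalgebra F R) : Subgroup ↥(algGroup F R J) :=
  (algGroup F R k).subgroupOf (algGroup F R J)

/-- `L_λ = 1 + 𝔩_λ` as a subgroup of `G`. -/
def Lgrp (J : NonUnitalSubalgebra F R) (lam : ↥J →ₗ[F] F) : Subgroup ↥(algGroup F R J) :=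
  algSubgroup (lone J lam) J

/-- `S_λ = 1 + 𝔰_λ` as a subgroup of `G`. -/
def Sgrp (J : NonUnitalSubalgebra F R) (lam : ↥J →ₗ[F] F) : Subgroup ↥(algGroup F R J) :=
  algSubgroup (sone J lam) J

/-- `L̄_λ = 1 + 𝔩̄_λ` as a subgroup of `G`. -/
def Lbarg (J : NonUnitalSubalgebra F R) (lam : ↥J →ₗ[F] F) : Subgroup ↥(algGroup F R J) :=
  algSubgroup (lbar J lam) J

/-- `S̄_λ = 1 + 𝔰̄_λ` as a subgroup of `G`. -/
def Sbarg (J : NonUnitalSubalgebra F R) (lam : ↥J →ₗ[F] F) : Subgroup ↥(algGroup F R J) :=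
  algSubgroup (sbar J lam) J

/-- Passing from an element of the subgroup `1 + k ≤ 1 + J` to an element of the
algebra group `1 + k` in its own right. -/
def toAlg {k J : NonUnitalSubalgebra F R} (x : ↥(algSubgroup k J)) : ↥(algGroup F R k) :=
  ⟨((x : ↥(algGroup F R J)) : Rˣ), Subgroup.mem_subgroupOf.mp x.2⟩

/-- The linear inclusion of a smaller subalgebra. -/
def inclMap {s J : NonUnitalSubalgebra F R} (h : s ≤ J) : ↥s →ₗ[F] ↥J where
  toFun x := ⟨(x : R), h x.2⟩
  map_add' x y := rfl
  map_smul' c x := rfl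

/-- Restriction of a functional on `J` to a smaller subalgebra. -/
def resTo {s J : NonUnitalSubalgebra F R} (h : s ≤ J) (lam : ↥J →ₗ[F] F) : ↥s →ₗ[F] F :=
  lam.comp (inclMap h)

/-- The character `ξ_λ = Ind_{L̄_λ}^G (θ_λ)`. -/
def xi (θ : AddChar F ℂ) (J : NonUnitalSubalgebra F R) (lam : ↥J →ₗ[F] F) :
    ↥(algGroup F R J) → ℂ :=
  indFun (Lbarg J lam) (fun x => thetaFn θ J lam ↑x)

/-- The set `Ξ_λ = {g λ s g⁻¹ : g ∈ G, s ∈ S̄_λ}`. -/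
def Xi (J : NonUnitalSubalgebra F R) (lam : ↥J →ₗ[F] F) : Set (↥J →ₗ[F] F) :=
  {nu | ∃ g : ↥(algGroup F R J), ∃ s ∈ Sbarg J lam, nu = coAct g (rightAct s lam)}

/-! ### Normality of algebra subgroups coming from ideals -/

theorem conj_mem_aux (s a : NonUnitalSubalgebra F R)
    (hl : ∀ x ∈ s, ∀ y ∈ a, x * y ∈ a) (hr : ∀ y ∈ a, ∀ x ∈ s, y * x ∈ a)
    (u : Rˣ) (hu1 : (u : R) - 1 ∈ s) (hu2 : ((u⁻¹ : Rˣ) : R) - 1 ∈ s)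
    (x : Rˣ) (hx : (x : R) - 1 ∈ a) : ((u * x * u⁻¹ : Rˣ) : R) - 1 ∈ a := by
  have h1 : (u : R) * ((u⁻¹ : Rˣ) : R) = 1 := Units.mul_inv u
  have key : ((u * x * u⁻¹ : Rˣ) : R) - 1 =
      ((u : R) - 1) * ((x : R) - 1) * (((u⁻¹ : Rˣ) : R) - 1) +
        ((u : R) - 1) * ((x : R) - 1) + ((x : R) - 1) * (((u⁻¹ : Rˣ) : R) - 1) +
        ((x : R) - 1) := by
    push_cast
    calc (u : R) * (x : R) * ((u⁻¹ : Rˣ) : R) - 1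
        = (u : R) * (x : R) * ((u⁻¹ : Rˣ) : R) - (u : R) * ((u⁻¹ : Rˣ) : R) := by rw [h1]
      _ = _ := by noncomm_ring
  rw [key]
  exact add_mem (add_mem (add_mem (hr _ (hl _ hu1 _ hx) _ hu2) (hl _ hu1 _ hx))
    (hr _ hx _ hu2)) hx

theorem algSubgroup_normal (s a : NonUnitalSubalgebra F R)
    (hl : ∀ x ∈ s, ∀ y ∈ a, x * y ∈ a) (hr : ∀ y ∈ a, ∀ x ∈ s, y * x ∈ a) :
    ((algGroup F R a).subgroupOf (algGroup F R s)).Normal := by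
  constructor
  intro n hn g
  rw [Subgroup.mem_subgroupOf] at hn ⊢
  have hginv : ((g⁻¹ : ↥(algGroup F R s)) : Rˣ) = ((g : Rˣ))⁻¹ := rfl
  have hcoe : ((g * n * g⁻¹ : ↥(algGroup F R s)) : Rˣ) = (g : Rˣ) * (n : Rˣ) * ((g : Rˣ))⁻¹ := by
    push_cast [hginv]; rfl
  rw [mem_algGroup]
  constructor
  · rw [hcoe]
    exact conj_mem_aux s a hl hr (g : Rˣ) (g : ↥(algGroup F R s)).2.1 (g : ↥(algGroup F R s)).2.2
      (n : Rˣ) hn.1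
  · have hinv : (((g * n * g⁻¹ : ↥(algGroup F R s)) : Rˣ))⁻¹ =
        (g : Rˣ) * ((n : Rˣ))⁻¹ * ((g : Rˣ))⁻¹ := by
      rw [hcoe]; group
    rw [hinv]
    exact conj_mem_aux s a hl hr (g : Rˣ) (g : ↥(algGroup F R s)).2.1 (g : ↥(algGroup F R s)).2.2
      ((n : Rˣ))⁻¹ hn.2

theorem lone_mul_mem (J : NonUnitalSubalgebra F R) (lam : ↥J →ₗ[F] F)
    {y z : R} (hy : y ∈ lone J lam) (hz : z ∈ J) : y * z ∈ lone J lam := by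
  refine ⟨J.mul_mem (lone_le J lam hy) hz, fun w hw => ?_⟩
  rw [mul_assoc]
  exact hy.2 (z * w) (J.mul_mem hz hw)

theorem sone_mul_lone_mem (J : NonUnitalSubalgebra F R) (lam : ↥J →ₗ[F] F)
    {x y : R} (hx : x ∈ sone J lam) (hy : y ∈ lone J lam) : x * y ∈ lone J lam := by
  refine ⟨J.mul_mem (sone_le J lam hx) (lone_le J lam hy), fun w hw => ?_⟩
  rw [mul_assoc]
  exact hx.2 (y * w) (lone_mul_mem J lam hy hw)

theorem kone_ideal_left (J : NonUnitalSubalgebra F R) (lam : ↥J →ₗ[F] F) :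
    ∀ x ∈ sone J lam, ∀ y ∈ kone J lam, x * y ∈ kone J lam := by
  intro x hx y hy
  exact ⟨sone_mul_lone_mem J lam hx hy.1, hx.2 y hy.1⟩

theorem kone_ideal_right (J : NonUnitalSubalgebra F R) (lam : ↥J →ₗ[F] F) :
    ∀ y ∈ kone J lam, ∀ x ∈ sone J lam, y * x ∈ kone J lam := by
  intro y hy x hx
  exact ⟨lone_mul_mem J lam hy.1 (sone_le J lam hx), hy.1.2 x (sone_le J lam hx)⟩

/-- `K_λ = 1 + 𝔨_λ` as a (normal) subgroup of `S_λ = 1 + 𝔰_λ`. -/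
def KgrpIn (J : NonUnitalSubalgebra F R) (lam : ↥J →ₗ[F] F) :
    Subgroup ↥(algGroup F R (sone J lam)) :=
  (algGroup F R (kone J lam)).subgroupOf (algGroup F R (sone J lam))

instance KgrpIn_normal (J : NonUnitalSubalgebra F R) (lam : ↥J →ₗ[F] F) :
    (KgrpIn J lam).Normal :=
  algSubgroup_normal (sone J lam) (kone J lam) (kone_ideal_left J lam) (kone_ideal_right J lam)

/-- `L_λ = 1 + 𝔩_λ` as a (normal) subgroup of `S_λ = 1 + 𝔰_λ`. -/
def LgrpIn (J : NonUnitalSubalgebra F R) (lam : ↥J →ₗ[F] F) :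
    Subgroup ↥(algGroup F R (sone J lam)) :=
  (algGroup F R (lone J lam)).subgroupOf (algGroup F R (sone J lam))

instance LgrpIn_normal (J : NonUnitalSubalgebra F R) (lam : ↥J →ₗ[F] F) :
    (LgrpIn J lam).Normal :=
  algSubgroup_normal (sone J lam) (lone J lam)
    (fun x hx y hy => sone_mul_lone_mem J lam hx hy)
    (fun y hy x hx => lone_mul_mem J lam hy (sone_le J lam hx))

/-! With `B = mulForm J lam`, `B(X, Y) = λ(XY)`, one has `gλ = λ + B(g⁻¹ - 1, ·)` and
`λh = λ + B(·, h⁻¹ - 1)`, and for nilpotent `𝔫` the map `g ↦ g - 1` is a bijection `G ≃ 𝔫`.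
Hence the stabilizer of `λ` is `1 + ker B = L_λ`, and `gλ ∈ λG` iff `B(g⁻¹ - 1, ·)` lies in the
range of `Bᵀ`, which is the annihilator of `ker B = 𝔩_λ`; that is, iff `g ∈ S_λ`.
Orbit–stabilizer for `S_λ` acting on `Gλ ∩ λG` gives `|S_λ| = |Gλ ∩ λG| |L_λ|`. For `G × Gᵐᵒᵖ`
acting on both sides, the stabilizer of `λ` projects onto `S_λ` with kernel the right stabilizer,
of order `|ker Bᵀ| = |ker B| = |L_λ|`; so `|G|² = |GλG| |S_λ| |L_λ|`, i.e.
`|Gλ|² = |GλG| |Gλ ∩ λG|`. Finally the `θ_μ` are orthogonal of norm one, so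
`⟨χ_λ, χ_λ⟩ = (|Gλ| / |GλG|)² |GλG| = |Gλ ∩ λG|`. -/

section General

variable {A S : Type*} [Ring A] [SetLike S A] [NonUnitalSubsemiringClass S A] {k : S}

theorem pow_sub_one_mem {u : A} (hu : u - 1 ∈ k) : ∀ m : ℕ, u ^ m - 1 ∈ k
  | 0 => by simp
  | m + 1 => by
    have h : u ^ (m + 1) - 1 = (u ^ m - 1) * (u - 1) + (u ^ m - 1) + (u - 1) := by
      noncomm_ring
    rw [h]
    exact add_mem (add_mem (mul_mem (pow_sub_one_mem hu m) hu) (pow_sub_one_mem hu m)) hu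

/-- In a finite ring `u⁻¹` is a power of `u`, so `1 + k` is closed under inverses. -/
theorem _root_.Units.inv_sub_one_mem [Finite A] {u : Aˣ} (hu : (u : A) - 1 ∈ k) :
    ((u⁻¹ : Aˣ) : A) - 1 ∈ k := by
  have hinv : u⁻¹ = u ^ (Nat.card Aˣ - 1) :=
    (eq_inv_of_mul_eq_one_left (by rw [pow_sub_one_mul Nat.card_pos.ne', pow_card_eq_one'])).symm
  rw [hinv, Units.val_pow_eq_pow_val]
  exact pow_sub_one_mem hu _

theorem _root_.LinearMap.finrank_ker_flip {K V : Type*} [Field K] [AddCommGroup V] [Module K V]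
    [FiniteDimensional K V] (B : V →ₗ[K] V →ₗ[K] K) :
    Module.finrank K (LinearMap.ker B.flip) = Module.finrank K (LinearMap.ker B) := by
  have hflip := LinearMap.finrank_range_add_finrank_ker B.flip
  have hker := Subspace.finrank_add_finrank_dualAnnihilator_eq (LinearMap.ker B)
  rw [← LinearMap.dualAnnihilator_ker_eq_range_flip] at hflip
  exact Nat.add_left_cancel (hflip.trans (hker.symm.trans (add_comm _ _)))

theorem _root_.MulAction.card_orbit_mul_card_stabilizer (G X : Type*) [Group G] [MulAction G X]
    (x : X) :
    Nat.card (MulAction.orbit G x) * Nat.card (MulAction.stabilizer G x) = Nat.card G := by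
  rw [Nat.card_coe_set_eq, ← MulAction.index_stabilizer, mul_comm, Subgroup.card_mul_index]

end General

section AlgebraGroup

variable {J : NonUnitalSubalgebra F R}

theorem mem_algGroup_iff {u : Rˣ} : u ∈ algGroup F R J ↔ (u : R) - 1 ∈ J :=
  ⟨And.left, fun h => ⟨h, Units.inv_sub_one_mem h⟩⟩

theorem mem_algSubgroup_iff {k : NonUnitalSubalgebra F R} {g : ↥(algGroup F R J)} :
    g ∈ algSubgroup k J ↔ (gElt g : R) ∈ k := by
  rw [algSubgroup, Subgroup.mem_subgroupOf, mem_algGroup_iff]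
  rfl

theorem IsNil.isNilpotent (hJ : IsNil J) {x : R} (hx : x ∈ J) : IsNilpotent x := by
  obtain ⟨N, hN⟩ := hJ
  refine ⟨N, ?_⟩
  simpa using hN (List.replicate N x) (fun y hy => List.eq_of_mem_replicate hy ▸ hx) (by simp)

def algGroupEquiv (hJ : IsNil J) : ↥(algGroup F R J) ≃ ↥J where
  toFun := gElt
  invFun X := ⟨(hJ.isNilpotent X.2).isUnit_one_add.unit, mem_algGroup_iff.2 (by simp)⟩
  left_inv g := by ext; simp [gElt]
  right_inv X := by ext; simp [gElt]

theorem gElt_inv_surjective (hJ : IsNil J) :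
    Function.Surjective fun g : ↥(algGroup F R J) => gElt g⁻¹ :=
  (algGroupEquiv hJ).surjective.comp inv_surjective

end AlgebraGroup

section Form

variable (J : NonUnitalSubalgebra F R) (lam : ↥J →ₗ[F] F)

def mulForm : ↥J →ₗ[F] ↥J →ₗ[F] F :=
  (LinearMap.mul F ↥J).compr₂ lam

variable {J lam}

@[simp]
theorem mulForm_apply (X Y : ↥J) : mulForm J lam X Y = lam (X * Y) := rfl

theorem lamE_coe_mul (X Y : ↥J) : lamE J lam ((X : R) * Y) = mulForm J lam X Y :=
  lamE_apply J lam (mul_mem X.2 Y.2)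

theorem mem_lone_iff {X : ↥J} : (X : R) ∈ lone J lam ↔ X ∈ LinearMap.ker (mulForm J lam) := by
  rw [LinearMap.mem_ker, LinearMap.ext_iff]
  exact ⟨fun h Y => (lamE_coe_mul X Y).symm.trans (h.2 Y Y.2),
    fun h => ⟨X.2, fun y hy => (lamE_coe_mul X ⟨y, hy⟩).trans (h ⟨y, hy⟩)⟩⟩

theorem mem_sone_iff {X : ↥J} :
    (X : R) ∈ sone J lam ↔ mulForm J lam X ∈ (LinearMap.ker (mulForm J lam)).dualAnnihilator := by
  rw [Submodule.mem_dualAnnihilator]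
  refine ⟨fun h Y hY => ?_, fun h => ⟨X.2, fun y hy => ?_⟩⟩
  · rw [← lamE_coe_mul]
    exact h.2 Y (mem_lone_iff.2 hY)
  · exact (lamE_coe_mul X ⟨y, lone_le J lam hy⟩).trans (h _ (mem_lone_iff.1 hy))

end Form

section Actions

variable {J : NonUnitalSubalgebra F R}

theorem leftAct_eq_add (g : ↥(algGroup F R J)) (lam : ↥J →ₗ[F] F) :
    leftAct g lam = lam + mulForm J lam (gElt g⁻¹) := by
  ext X
  simp only [leftAct, LinearMap.comp_apply, LinearMap.add_apply, mulForm_apply, ← map_add]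
  congr 1
  ext
  simp [lmulMap, gElt, sub_mul]

theorem rightAct_eq_add (g : ↥(algGroup F R J)) (lam : ↥J →ₗ[F] F) :
    rightAct g lam = lam + (mulForm J lam).flip (gElt g⁻¹) := by
  ext X
  simp only [rightAct, LinearMap.comp_apply, LinearMap.add_apply, LinearMap.flip_apply,
    mulForm_apply, ← map_add]
  congr 1
  ext
  simp [rmulMap, gElt, mul_sub]

theorem leftAct_rightAct_comm (g h : ↥(algGroup F R J)) (lam : ↥J →ₗ[F] F) :
    leftAct g (rightAct h lam) = rightAct h (leftAct g lam) := by
  ext X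
  simp [leftAct, rightAct, lmulMap, rmulMap, mul_assoc]

instance : MulAction ↥(algGroup F R J) (↥J →ₗ[F] F) where
  smul := leftAct
  one_smul lam := by ext X; simp [HSMul.hSMul, leftAct, lmulMap]
  mul_smul g h lam := by ext X; simp [HSMul.hSMul, leftAct, lmulMap, mul_assoc]

instance : MulAction (↥(algGroup F R J))ᵐᵒᵖ (↥J →ₗ[F] F) where
  smul h := rightAct h.unop
  one_smul lam := by ext X; simp [HSMul.hSMul, rightAct, rmulMap]
  mul_smul g h lam := by ext X; simp [HSMul.hSMul, rightAct, rmulMap, mul_assoc]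

instance : SMulCommClass ↥(algGroup F R J) (↥(algGroup F R J))ᵐᵒᵖ (↥J →ₗ[F] F) :=
  ⟨fun g h lam => leftAct_rightAct_comm g h.unop lam⟩

instance : MulAction (↥(algGroup F R J) × (↥(algGroup F R J))ᵐᵒᵖ) (↥J →ₗ[F] F) :=
  MulAction.prodOfSMulCommClass _ _ _

end Actions

section Orbits

open MulAction

variable {J : NonUnitalSubalgebra F R} (lam : ↥J →ₗ[F] F)

theorem leftAct_eq_self_iff (g : ↥(algGroup F R J)) :
    leftAct g lam = lam ↔ gElt g⁻¹ ∈ LinearMap.ker (mulForm J lam) := by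
  rw [leftAct_eq_add, add_eq_left, LinearMap.mem_ker]

theorem rightAct_eq_self_iff (h : ↥(algGroup F R J)) :
    rightAct h lam = lam ↔ gElt h⁻¹ ∈ LinearMap.ker (mulForm J lam).flip := by
  rw [rightAct_eq_add, add_eq_left, LinearMap.mem_ker]

theorem mem_Lgrp_iff (g : ↥(algGroup F R J)) : g ∈ Lgrp J lam ↔ leftAct g lam = lam := by
  rw [Lgrp, ← Subgroup.inv_mem_iff, mem_algSubgroup_iff, mem_lone_iff, leftAct_eq_self_iff]

theorem stabilizer_eq_Lgrp : stabilizer ↥(algGroup F R J) lam = Lgrp J lam := by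
  ext g
  exact (mem_Lgrp_iff lam g).symm

theorem leftAct_mem_rightOrbit_iff (hJ : IsNil J) (g : ↥(algGroup F R J)) :
    leftAct g lam ∈ rightOrbit J lam ↔
      mulForm J lam (gElt g⁻¹) ∈ LinearMap.range (mulForm J lam).flip := by
  simp only [rightOrbit, Set.mem_range, LinearMap.mem_range, rightAct_eq_add, leftAct_eq_add,
    add_right_inj]
  exact (gElt_inv_surjective hJ).exists (p := fun X => _ = _) |>.symm

theorem mem_Sgrp_iff (hJ : IsNil J) (g : ↥(algGroup F R J)) :
    g ∈ Sgrp J lam ↔ leftAct g lam ∈ leftOrbit J lam ∩ rightOrbit J lam := by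
  rw [Sgrp, ← Subgroup.inv_mem_iff, mem_algSubgroup_iff, mem_sone_iff,
    LinearMap.dualAnnihilator_ker_eq_range_flip, ← leftAct_mem_rightOrbit_iff lam hJ]
  exact (and_iff_right ⟨g, rfl⟩).symm

theorem rightOrbit_eq_orbit : rightOrbit J lam = orbit (↥(algGroup F R J))ᵐᵒᵖ lam :=
  (MulOpposite.unop_surjective.range_comp _).symm

theorem twoOrbit_eq_orbit :
    twoOrbit J lam = orbit (↥(algGroup F R J) × (↥(algGroup F R J))ᵐᵒᵖ) lam := by
  ext μ
  constructor
  · rintro ⟨g, h, rfl⟩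
    exact ⟨(g, MulOpposite.op h), rfl⟩
  · rintro ⟨⟨g, h⟩, rfl⟩
    exact ⟨g, h.unop, rfl⟩

theorem Lgrp_le_Sgrp (hJ : IsNil J) : Lgrp J lam ≤ Sgrp J lam := fun g hg => by
  rw [mem_Sgrp_iff lam hJ, (mem_Lgrp_iff lam g).1 hg, rightOrbit_eq_orbit]
  exact ⟨mem_orbit_self (M := ↥(algGroup F R J)) lam, mem_orbit_self lam⟩

theorem orbit_Sgrp (hJ : IsNil J) :
    orbit (Sgrp J lam) lam = leftOrbit J lam ∩ rightOrbit J lam := by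
  ext μ
  constructor
  · rintro ⟨s, rfl⟩
    exact (mem_Sgrp_iff lam hJ s).1 s.2
  · intro hμ
    obtain ⟨g, rfl⟩ := hμ.1
    exact ⟨⟨g, (mem_Sgrp_iff lam hJ g).2 hμ⟩, rfl⟩

theorem stabilizer_Sgrp : stabilizer (Sgrp J lam) lam = (Lgrp J lam).subgroupOf (Sgrp J lam) := by
  ext s
  rw [Subgroup.mem_subgroupOf, mem_Lgrp_iff]
  rfl

theorem card_Sgrp (hJ : IsNil J) :
    Nat.card (Sgrp J lam) =
      Nat.card ↥(leftOrbit J lam ∩ rightOrbit J lam) * Nat.card (Lgrp J lam) := by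
  rw [← card_orbit_mul_card_stabilizer (Sgrp J lam) _ lam, orbit_Sgrp lam hJ, stabilizer_Sgrp,
    Nat.card_congr (Subgroup.subgroupOfEquivOfLe (Lgrp_le_Sgrp lam hJ)).toEquiv]

theorem card_Lgrp (hJ : IsNil J) :
    Nat.card (Lgrp J lam) = Nat.card (LinearMap.ker (mulForm J lam)) :=
  Nat.card_congr <| ((Equiv.inv _).trans (algGroupEquiv hJ)).subtypeEquiv fun g => by
    rw [mem_Lgrp_iff, leftAct_eq_self_iff]
    rfl

theorem card_stabilizer_op (hJ : IsNil J) :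
    Nat.card (stabilizer (↥(algGroup F R J))ᵐᵒᵖ lam) =
      Nat.card (LinearMap.ker (mulForm J lam).flip) :=
  Nat.card_congr <|
    (MulOpposite.opEquiv.symm.trans ((Equiv.inv _).trans (algGroupEquiv hJ))).subtypeEquiv
      fun h => rightAct_eq_self_iff lam h.unop

theorem card_stabilizer_op_eq_card_Lgrp (hJ : IsNil J) :
    Nat.card (stabilizer (↥(algGroup F R J))ᵐᵒᵖ lam) = Nat.card (Lgrp J lam) := by
  rw [card_stabilizer_op lam hJ, card_Lgrp lam hJ]
  have := Module.Free.of_divisionRing F (LinearMap.ker (mulForm J lam))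
  have := Module.Free.of_divisionRing F (LinearMap.ker (mulForm J lam).flip)
  exact Nat.card_congr (LinearEquiv.ofFinrankEq _ _ (LinearMap.finrank_ker_flip _)).toEquiv

theorem card_stabilizer_prod (hJ : IsNil J) :
    Nat.card (stabilizer (↥(algGroup F R J) × (↥(algGroup F R J))ᵐᵒᵖ) lam) =
      Nat.card (Sgrp J lam) * Nat.card (stabilizer (↥(algGroup F R J))ᵐᵒᵖ lam) := by
  set f := (MonoidHom.fst _ _).comp
    (stabilizer (↥(algGroup F R J) × (↥(algGroup F R J))ᵐᵒᵖ) lam).subtype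
  have hrange : f.range = Sgrp J lam := by
    ext g
    rw [MonoidHom.mem_range, mem_Sgrp_iff lam hJ, Set.mem_inter_iff, and_iff_right ⟨g, rfl⟩,
      rightOrbit_eq_orbit]
    constructor
    · rintro ⟨⟨⟨g', h⟩, hp⟩, rfl⟩
      have hp' : h • g' • lam = lam := (smul_comm g' h lam).symm.trans hp
      exact ⟨h⁻¹, ((smul_eq_iff_eq_inv_smul h).1 hp').symm⟩
    · rintro ⟨h, hh⟩
      change h • lam = g • lam at hh
      refine ⟨⟨(g, h⁻¹), ?_⟩, rfl⟩
      change g • h⁻¹ • lam = lam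
      rw [smul_comm, ← hh, inv_smul_smul]
  have hker : Nat.card f.ker = Nat.card (stabilizer (↥(algGroup F R J))ᵐᵒᵖ lam) :=
    Nat.card_congr
      { toFun p := ⟨p.1.1.2, by
          have h1 : p.1.1.1 = 1 := p.2
          have h2 : p.1.1.1 • p.1.1.2 • lam = lam := p.1.2
          rwa [h1, one_smul] at h2⟩
        invFun h := ⟨⟨(1, h.1), by
          change (1 : ↥(algGroup F R J)) • h.1 • lam = lam
          rw [one_smul]
          exact h.2⟩, rfl⟩
        left_inv p := Subtype.ext <| Subtype.ext <| Prod.ext (p.2 : p.1.1.1 = 1).symm rfl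
        right_inv h := rfl }
  rw [← hrange, ← hker, ← Subgroup.index_ker, mul_comm, Subgroup.card_mul_index]

theorem card_leftOrbit_mul_self (hJ : IsNil J) :
    Nat.card (leftOrbit J lam) * Nat.card (leftOrbit J lam) =
      Nat.card (twoOrbit J lam) * Nat.card ↥(leftOrbit J lam ∩ rightOrbit J lam) := by
  have hleft :
      Nat.card (leftOrbit J lam) * Nat.card (Lgrp J lam) = Nat.card ↥(algGroup F R J) := by
    rw [← stabilizer_eq_Lgrp]
    exact card_orbit_mul_card_stabilizer _ _ lam
  have htwo := card_orbit_mul_card_stabilizer (↥(algGroup F R J) × (↥(algGroup F R J))ᵐᵒᵖ) _ lam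
  rw [card_stabilizer_prod lam hJ, card_stabilizer_op_eq_card_Lgrp lam hJ, card_Sgrp lam hJ,
    Nat.card_prod, Nat.card_congr MulOpposite.opEquiv.symm, ← twoOrbit_eq_orbit] at htwo
  have hL : 0 < Nat.card (Lgrp J lam) := Nat.card_pos
  refine Nat.eq_of_mul_eq_mul_right (Nat.mul_pos hL hL) ?_
  calc _ = Nat.card (leftOrbit J lam) * Nat.card (Lgrp J lam) *
        (Nat.card (leftOrbit J lam) * Nat.card (Lgrp J lam)) := by ring
    _ = _ := by rw [hleft, ← htwo]; ring

end Orbits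

section Characters

theorem innerG_smul_sum {G W : Type} [Group G] [Finite G] [DecidableEq W] (s : Finset W)
    (f : W → G → ℂ) (c : ℂ) (horth : ∀ μ ∈ s, ∀ ν ∈ s,
      ∑ᶠ g, f μ g * starRingEnd ℂ (f ν g) = if μ = ν then (Nat.card G : ℂ) else 0) :
    innerG G (fun g => c * ∑ μ ∈ s, f μ g) (fun g => c * ∑ μ ∈ s, f μ g) =
      c * starRingEnd ℂ c * s.card := by
  have := Fintype.ofFinite G
  have hG : (Nat.card G : ℂ) ≠ 0 := Nat.cast_ne_zero.2 Nat.card_pos.ne'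
  have hexpand : ∀ g, (c * ∑ μ ∈ s, f μ g) * starRingEnd ℂ (c * ∑ μ ∈ s, f μ g) =
      c * starRingEnd ℂ c * ∑ μ ∈ s, ∑ ν ∈ s, f μ g * starRingEnd ℂ (f ν g) := by
    intro g
    rw [map_mul, map_sum, ← Finset.sum_mul_sum]
    ring
  simp only [innerG, finsum_eq_sum_of_fintype] at horth ⊢
  rw [Finset.sum_congr rfl fun g _ => hexpand g, ← Finset.mul_sum, Finset.sum_comm,
    Finset.sum_congr rfl fun μ _ => Finset.sum_comm,
    Finset.sum_congr rfl fun μ hμ => Finset.sum_congr rfl fun ν hν => horth μ hμ ν hν]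
  simp only [Finset.sum_ite_eq, Finset.sum_ite_mem, Finset.inter_self, Finset.sum_const,
    nsmul_eq_mul]
  field_simp

variable {J : NonUnitalSubalgebra F R}

/-- For `μ ≠ ν` the functional `μ - ν` is onto `F`, so `θ ∘ (μ - ν)` is a nontrivial character
of `J`. -/
theorem finsum_thetaFn_mul_conj (hJ : IsNil J) {θ : AddChar F ℂ} (hθ : θ ≠ 1)
    (μ ν : ↥J →ₗ[F] F) :
    ∑ᶠ g, thetaFn θ J μ g * starRingEnd ℂ (thetaFn θ J ν g) =
      if μ = ν then (Nat.card ↥(algGroup F R J) : ℂ) else 0 := by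
  set ψ := θ.compAddMonoidHom (μ - ν).toAddMonoidHom
  have hprod :
      ∀ g, thetaFn θ J μ g * starRingEnd ℂ (thetaFn θ J ν g) = ψ (algGroupEquiv hJ g) := by
    intro g
    rw [thetaFn, thetaFn, ← AddChar.map_neg_eq_conj, ← AddChar.map_add_eq_mul]
    simp [ψ, algGroupEquiv, sub_eq_add_neg]
  have hψ : ψ = 0 ↔ μ = ν := by
    refine ⟨fun h => by_contra fun hne => hθ ?_, fun h => ?_⟩
    · have hsurj := LinearMap.surjective_iff_ne_zero.2 (sub_ne_zero.2 hne)
      exact AddChar.compAddMonoidHom_injective_left _ hsurj h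
    · ext X
      simp [ψ, h]
  rw [finsum_congr hprod, finsum_comp_equiv (algGroupEquiv hJ), finsum_eq_sum_of_fintype,
    AddChar.sum_eq_ite, Nat.card_congr (algGroupEquiv hJ), Nat.card_eq_fintype_card]
  exact if_congr hψ rfl rfl

theorem innerG_superchar (hJ : IsNil J) {θ : AddChar F ℂ} (hθ : θ ≠ 1) (lam : ↥J →ₗ[F] F) :
    innerG ↥(algGroup F R J) (superchar θ J lam) (superchar θ J lam) =
      Nat.card ↥(leftOrbit J lam ∩ rightOrbit J lam) := by
  have : Finite (↥J →ₗ[F] F) := Finite.of_injective _ DFunLike.coe_injective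
  have hfin : (twoOrbit J lam).Finite := Set.toFinite _
  have hsum : superchar θ J lam = fun g =>
      ((Nat.card (leftOrbit J lam) : ℂ) / Nat.card (twoOrbit J lam)) *
        ∑ μ ∈ hfin.toFinset, thetaFn θ J μ g := by
    funext g
    rw [superchar, finsum_mem_eq_finite_toFinset_sum]
  have : Nonempty (twoOrbit J lam) :=
    ⟨⟨lam, twoOrbit_eq_orbit lam ▸ MulAction.mem_orbit_self lam⟩⟩
  have htwo : (Nat.card (twoOrbit J lam) : ℂ) ≠ 0 := Nat.cast_ne_zero.2 Nat.card_pos.ne'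
  have hsq : (Nat.card (leftOrbit J lam) : ℂ) * Nat.card (leftOrbit J lam) =
      Nat.card (twoOrbit J lam) * Nat.card ↥(leftOrbit J lam ∩ rightOrbit J lam) :=
    mod_cast card_leftOrbit_mul_self lam hJ
  rw [hsum, innerG_smul_sum _ _ _ fun μ _ ν _ => finsum_thetaFn_mul_conj hJ hθ μ ν,
    ← Nat.card_eq_card_finite_toFinset hfin, map_div₀, map_natCast, map_natCast]
  field_simp
  linear_combination hsq

end Characters

theorem statement0 (F : Type) [Field F] [Fintype F]
    (R : Type) [Ring R] [Algebra F R] [Fintype R]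
    (J : NonUnitalSubalgebra F R) (hJ : IsNil J)
    (θ : AddChar F ℂ) (hθ : θ ≠ 1)
    (lam : ↥J →ₗ[F] F) :
    (∀ g : ↥(algGroup F R J), g ∈ Lgrp J lam ↔ leftAct g lam = lam) ∧
    (∀ g : ↥(algGroup F R J), g ∈ Sgrp J lam ↔
      leftAct g lam ∈ leftOrbit J lam ∩ rightOrbit J lam) ∧
    (Nat.card ↥(Sgrp J lam) : ℂ) / (Nat.card ↥(Lgrp J lam) : ℂ) =
      (Nat.card ↥(leftOrbit J lam ∩ rightOrbit J lam) : ℂ) ∧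
    innerG ↥(algGroup F R J) (superchar θ J lam) (superchar θ J lam) =
      (Nat.card ↥(leftOrbit J lam ∩ rightOrbit J lam) : ℂ) := by
  have hL : (Nat.card (Lgrp J lam) : ℂ) ≠ 0 := Nat.cast_ne_zero.2 Nat.card_pos.ne'
  refine ⟨mem_Lgrp_iff lam, mem_Sgrp_iff lam hJ, ?_, innerG_superchar hJ hθ lam⟩
  rw [card_Sgrp lam hJ, Nat.cast_mul, mul_div_cancel_right₀ _ hL]

end IterChar
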